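/- For all Γ ∪ {α, β} ⊆ Fm: (1) if α ⊢_¬ β then ¬α ⊬_¬ β; (2) α ⊢_¬ β if and only if ¬β ⊢_¬ ¬α; (3) if Γ ∪ {α} ⊢_¬ β and Γ ∪ {¬α} ⊢_¬ β, then Γ ⊢_¬ β. -/

import Mathlib

/-- Formulas of the algebraic language with a single unary connective ¬,
built as the absolutely free algebra over a countably infinite set of variables. -/
inductive Fm : Type where
  | var : ℕ → Fm
  | neg : Fm → Fm

/-- `negn n α` is ¬ⁿα: ¬⁰α = α and ¬ⁿα = ¬(¬ⁿ⁻¹α). -/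
def negn : ℕ → Fm → Fm
  | 0, α => α
  | n + 1, α => Fm.neg (negn n α)

/-- The consequence relation ⊢_¬ of the Hilbert-style calculus with rules
(R1) x, ¬x ⊢ y, (R2) x ⊢ ¬¬x, (R3) ¬¬x ⊢ x: `Deriv Γ α` iff α has a finite
proof from Γ using substitution instances of these rules. -/
inductive Deriv : Set Fm → Fm → Prop where
  | mem {Γ : Set Fm} {α : Fm} : α ∈ Γ → Deriv Γ α
  | r1 {Γ : Set Fm} {α β : Fm} : Deriv Γ α → Deriv Γ (Fm.neg α) → Deriv Γ β
  | r2 {Γ : Set Fm} {α : Fm} : Deriv Γ α → Deriv Γ (Fm.neg (Fm.neg α))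
  | r3 {Γ : Set Fm} {α : Fm} : Deriv Γ (Fm.neg (Fm.neg α)) → Deriv Γ α

/-!
Every formula is a literal `¬ⁿ p`, and `⊢_¬` is exactly two-valued consequence with `¬` read as
Boolean negation. Soundness is immediate. For completeness, if `Γ ⊬ β` then `Γ ∪ {¬β}` contains no
complementary pair of literals (such a pair would derive anything, and a literal of `Γ` equivalent
to `β` would derive `β`, since `¬¬` can be added and removed freely), so it has a model. The three
claims are then the classical facts that no literal is a tautology, contraposition, and proof by
cases.
-/

namespace Fm

def atom : Fm → ℕ
  | var n => n
  | neg φ => φ.atom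

def sign : Fm → Bool
  | var _ => true
  | neg φ => !φ.sign

def eval (v : ℕ → Prop) : Fm → Prop
  | var n => v n
  | neg φ => ¬ φ.eval v

@[simp] lemma atom_neg (φ : Fm) : (neg φ).atom = φ.atom := rfl

@[simp] lemma sign_neg (φ : Fm) : (neg φ).sign = !φ.sign := rfl

@[simp] lemma eval_neg (v : ℕ → Prop) (φ : Fm) : (neg φ).eval v ↔ ¬ φ.eval v := Iff.rfl

lemma eval_iff (v : ℕ → Prop) (φ : Fm) : φ.eval v ↔ (v φ.atom ↔ φ.sign) := by
  induction φ with
  | var n => simp [eval, atom, sign]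
  | neg φ ih => cases h : φ.sign <;> simp_all

lemma exists_not_eval (φ : Fm) : ∃ v, ¬ φ.eval v :=
  ⟨fun _ => φ.sign = false, by cases h : φ.sign <;> simp [eval_iff, h]⟩

end Fm

open Fm

def Entails (Γ : Set Fm) (φ : Fm) : Prop :=
  ∀ v : ℕ → Prop, (∀ γ ∈ Γ, γ.eval v) → φ.eval v

lemma entails_singleton_iff {α β : Fm} : Entails {α} β ↔ ∀ v, α.eval v → β.eval v := by
  simp [Entails]

lemma Deriv.entails {Γ : Set Fm} {φ : Fm} (h : Deriv Γ φ) : Entails Γ φ := by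
  intro v hv
  induction h with
  | mem hm => exact hv _ hm
  | r1 _ _ ih₁ ih₂ => exact absurd ih₁ ih₂
  | r2 _ ih => exact not_not_intro ih
  | r3 _ ih => exact not_not.mp ih

lemma Deriv.of_atom_eq_of_sign_eq {Γ : Set Fm} :
    ∀ {φ ψ : Fm}, φ.atom = ψ.atom → φ.sign = ψ.sign → Deriv Γ φ → Deriv Γ ψ
  | .var _, .var _, ha, _, h => by cases ha; exact h
  | .neg (.neg φ), _, ha, hs, h => of_atom_eq_of_sign_eq (φ := φ) ha (by simpa using hs) h.r3
  | _, .neg (.neg ψ), ha, hs, h => (of_atom_eq_of_sign_eq (ψ := ψ) ha (by simpa using hs) h).r2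
  | .var _, .neg (.var _), _, hs, _ => by simp [sign] at hs
  | .neg (.var _), .var _, _, hs, _ => by simp [sign] at hs
  | .neg (.var _), .neg (.var _), ha, _, h => by cases ha; exact h

lemma Deriv.of_sign_ne {Γ : Set Fm} {γ δ : Fm} (hγ : γ ∈ Γ) (hδ : δ ∈ Γ)
    (ha : γ.atom = δ.atom) (hs : γ.sign ≠ δ.sign) (φ : Fm) : Deriv Γ φ :=
  (mem hγ).r1 <| of_atom_eq_of_sign_eq (ψ := neg γ) ha.symm (Bool.eq_not_iff.2 hs.symm) (mem hδ)

def SignCoherent (Δ : Set Fm) : Prop :=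
  ∀ γ ∈ Δ, ∀ δ ∈ Δ, γ.atom = δ.atom → γ.sign = δ.sign

lemma SignCoherent.exists_model {Δ : Set Fm} (h : SignCoherent Δ) :
    ∃ v : ℕ → Prop, ∀ γ ∈ Δ, γ.eval v := by
  refine ⟨fun n => ∃ δ ∈ Δ, δ.atom = n ∧ δ.sign, fun γ hγ => (eval_iff _ _).2 ⟨?_, ?_⟩⟩
  · rintro ⟨δ, hδ, ha, hs⟩
    rwa [h γ hγ δ hδ ha.symm]
  · exact fun hs => ⟨γ, hγ, rfl, hs⟩

lemma Entails.deriv {Γ : Set Fm} {β : Fm} (h : Entails Γ β) : Deriv Γ β := by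
  by_contra hβ
  suffices SignCoherent (insert (neg β) Γ) by
    obtain ⟨v, hv⟩ := this.exists_model
    exact hv _ (Set.mem_insert _ _) (h v fun γ hγ => hv γ (Set.mem_insert_of_mem _ hγ))
  intro γ hγ δ hδ ha
  by_contra hs
  rcases hγ with rfl | hγ <;> rcases hδ with rfl | hδ
  · exact hs rfl
  · exact hβ <| .of_atom_eq_of_sign_eq ha.symm (by simpa [eq_comm] using hs) (.mem hδ)
  · exact hβ <| .of_atom_eq_of_sign_eq ha (by simpa using hs) (.mem hγ)
  · exact hβ <| .of_sign_ne hγ hδ ha hs β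

theorem deriv_iff_entails {Γ : Set Fm} {φ : Fm} : Deriv Γ φ ↔ Entails Γ φ :=
  ⟨Deriv.entails, Entails.deriv⟩

/-- (1) if α ⊢_¬ β then ¬α ⊬_¬ β; (2) α ⊢_¬ β iff ¬β ⊢_¬ ¬α;
(3) if Γ, α ⊢_¬ β and Γ, ¬α ⊢_¬ β then Γ ⊢_¬ β. -/
theorem stmt3 (Γ : Set Fm) (α β : Fm) :
    (Deriv {α} β → ¬ Deriv {Fm.neg α} β) ∧
    (Deriv {α} β ↔ Deriv {Fm.neg β} (Fm.neg α)) ∧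
    (Deriv (Γ ∪ {α}) β → Deriv (Γ ∪ {Fm.neg α}) β → Deriv Γ β) := by
  simp only [deriv_iff_entails, entails_singleton_iff, eval_neg]
  refine ⟨fun h₁ h₂ => ?_, forall_congr' fun v => not_imp_not.symm, fun h₁ h₂ v hv => ?_⟩
  · obtain ⟨v, hv⟩ := β.exists_not_eval
    exact hv ((em (α.eval v)).elim (h₁ v) (h₂ v))
  · have hΓ : ∀ φ : Fm, φ.eval v → ∀ γ ∈ Γ ∪ {φ}, γ.eval v := by
      rintro φ hφ γ (hγ | rfl)
      exacts [hv γ hγ, hφ]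
    exact (em (α.eval v)).elim (fun hα => h₁ v (hΓ α hα)) (fun hα => h₂ v (hΓ _ hα))
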